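/- For all ordinals α, β < ε_{Ω+1}: k(α ⊕ β) ≤ k(α) ⊕ k(β), and moreover k(α) ≤ k(α ⊕ β) and k(β) ≤ k(α ⊕ β). -/

import Mathlib

/-- `Ω`, the first uncountable ordinal `ω₁`. -/
noncomputable def Omega1 : Ordinal.{0} := (Cardinal.aleph 1).ord

/-- `KMem β α` expresses `β ∈ K(α)`, where `K(0) = {0}` and, for
`α = Ω^{α₁}·β₁ + … + Ω^{αₙ}·βₙ` in base-`Ω` Cantor normal form,
`K(α) = {β₁,…,βₙ} ∪ K(α₁) ∪ … ∪ K(αₙ)`. -/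
inductive KMem : Ordinal.{0} → Ordinal.{0} → Prop
  | zero : KMem 0 0
  | coeff {α e c : Ordinal.{0}} : (e, c) ∈ Ordinal.CNF Omega1 α → KMem c α
  | expo {α e c β : Ordinal.{0}} : (e, c) ∈ Ordinal.CNF Omega1 α → KMem β e → KMem β α

/-- `k(α) = max K(α)` (as a supremum; `K(α)` is finite for `α < ε_{Ω+1}`). -/
noncomputable def kMax (α : Ordinal.{0}) : Ordinal.{0} := sSup {β | KMem β α}

/-- Membership in `P`, the class of additively closed ordinals `{ω^ξ : ξ ∈ On}`. -/
def AddClosed (ζ : Ordinal.{0}) : Prop := ∃ ξ : Ordinal.{0}, ζ = Ordinal.omega0 ^ ξ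

/-- The collapsing function `ϑ`: `ϑ(α)` is the least `ζ ∈ P` such that `k(α) < ζ` and
for all `β < α` with `k(β) < ζ` one has `ϑ(β) < ζ`. -/
noncomputable def theta : Ordinal.{0} → Ordinal.{0} :=
  Ordinal.lt_wf.fix (C := fun _ => Ordinal.{0}) fun α IH =>
    sInf {ζ : Ordinal.{0} | AddClosed ζ ∧ kMax α < ζ ∧
      ∀ (β : Ordinal.{0}) (h : β < α), kMax β < ζ → IH β h < ζ}

/-- `ε_{Ω+1}`, the least epsilon number above `Ω`. -/
noncomputable def epsOmega1 : Ordinal.{0} :=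
  Ordinal.nfp (fun a => Ordinal.omega0 ^ a) (Omega1 + 1)

/-- The tower `Ω_n[1]`: `Ω_0[1] = 1` and `Ω_{n+1}[1] = Ω ^ Ω_n[1]`. -/
noncomputable def OmegaTower : ℕ → Ordinal.{0}
  | 0 => 1
  | nn + 1 => Omega1 ^ OmegaTower nn

/-- The Howard–Bachmann ordinal `ϑ(ε_{Ω+1}) = sup_{n<ω} ϑ(Ω_n[1])`. -/
noncomputable def HowardBachmann : Ordinal.{0} := ⨆ nn : ℕ, theta (OmegaTower nn)

universe u

/-- Natural (Hessenberg) addition, as `Ordinal.nadd` in the older Mathlib. -/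
noncomputable def Ordinal.nadd (a b : Ordinal.{u}) : Ordinal.{u} :=
  max (⨆ x : Set.Iio a, Order.succ (Ordinal.nadd x.1 b))
    (⨆ x : Set.Iio b, Order.succ (Ordinal.nadd a x.1))
termination_by (a, b)
decreasing_by
  · exact Prod.Lex.left _ _ x.2
  · exact Prod.Lex.right _ x.2

namespace NaturalOps
infixl:65 " ♯ " => Ordinal.nadd
end NaturalOps

/-!
Write `α = Ω^L·c₁ + r₁` and `β = Ω^L·c₂ + r₂` with `L = log_Ω (max α β)`, `c₁, c₂ < Ω` and
`r₁, r₂ < Ω^L`. Since `Ω^L` is closed under natural addition,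
`α ♯ β = Ω^L·(c₁ ♯ c₂) + (r₁ ♯ r₂)` is again of this shape, so
`K(α ♯ β) = {c₁ ♯ c₂} ∪ K(L) ∪ K(r₁ ♯ r₂)`, while `K(α) = {c₁} ∪ K(L) ∪ K(r₁)` (or `K(r₁)` if
`c₁ = 0`). Both bounds then follow by induction on `α ♯ β`.

The splitting of `♯` works for any `p` closed under `♯`: the digitwise sum
`p·(a/p ♯ b/p) + (a%p ♯ b%p)` is strictly monotone in each argument, hence bounds `a ♯ b` from
above (`♯` is the least such function), and is bounded by `a ♯ b` because `♯` dominates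
`+` and `p·-` termwise.
-/

open Order NaturalOps

namespace Ordinal

variable {a b c d o p x : Ordinal.{u}}

theorem nadd_le_iff : a ♯ b ≤ c ↔ (∀ a' < a, a' ♯ b < c) ∧ ∀ b' < b, a ♯ b' < c := by
  rw [nadd, max_le_iff, Ordinal.iSup_le_iff, Ordinal.iSup_le_iff]
  simp only [succ_le_iff, Subtype.forall, Set.mem_Iio]

theorem lt_nadd_iff : a < b ♯ c ↔ (∃ b' < b, a ≤ b' ♯ c) ∨ ∃ c' < c, a ≤ b ♯ c' := by
  simpa only [not_le, not_and_or, not_forall, not_lt, exists_prop] using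
    (nadd_le_iff (a := b) (b := c) (c := a)).not

theorem nadd_lt_nadd_right (h : a < b) (c : Ordinal.{u}) : a ♯ c < b ♯ c :=
  lt_nadd_iff.2 (.inl ⟨a, h, le_rfl⟩)

theorem nadd_lt_nadd_left (h : b < c) (a : Ordinal.{u}) : a ♯ b < a ♯ c :=
  lt_nadd_iff.2 (.inr ⟨b, h, le_rfl⟩)

theorem nadd_le_nadd_right (h : a ≤ b) (c : Ordinal.{u}) : a ♯ c ≤ b ♯ c :=
  (StrictMono.monotone fun _ _ h ↦ nadd_lt_nadd_right h c) h

theorem nadd_le_nadd_left (h : b ≤ c) (a : Ordinal.{u}) : a ♯ b ≤ a ♯ c :=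
  (StrictMono.monotone fun _ _ h ↦ nadd_lt_nadd_left h a) h

theorem nadd_le_nadd (h₁ : a ≤ b) (h₂ : c ≤ d) : a ♯ c ≤ b ♯ d :=
  (nadd_le_nadd_right h₁ c).trans (nadd_le_nadd_left h₂ b)

theorem le_self_nadd : a ≤ a ♯ b :=
  StrictMono.le_apply (f := (· ♯ b)) fun _ _ h ↦ nadd_lt_nadd_right h b

theorem le_nadd_self : a ≤ b ♯ a :=
  StrictMono.le_apply (f := (b ♯ ·)) fun _ _ h ↦ nadd_lt_nadd_left h b

theorem nadd_le_of_strictMono {f : Ordinal.{u} → Ordinal.{u} → Ordinal.{u}}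
    (hl : ∀ b, StrictMono (f · b)) (hr : ∀ a, StrictMono (f a)) (a b : Ordinal.{u}) :
    a ♯ b ≤ f a b := by
  induction a using WellFoundedLT.induction generalizing b with | _ a iha =>
  induction b using WellFoundedLT.induction with | _ b ihb =>
  exact nadd_le_iff.2 ⟨fun a' h ↦ (iha a' h b).trans_lt (hl b h),
    fun b' h ↦ (ihb b' h).trans_lt (hr a h)⟩

theorem nadd_comm (a b : Ordinal.{u}) : a ♯ b = b ♯ a := by
  have key : ∀ a b : Ordinal.{u}, a ♯ b ≤ b ♯ a :=
    nadd_le_of_strictMono (fun _ _ _ h ↦ nadd_lt_nadd_left h _)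
      (fun _ _ _ h ↦ nadd_lt_nadd_right h _)
  exact (key a b).antisymm (key b a)

@[simp]
theorem nadd_zero (a : Ordinal.{u}) : a ♯ 0 = a := by
  induction a using WellFoundedLT.induction with | _ a ih =>
  refine (nadd_le_iff.2 ⟨fun a' h ↦ ?_, fun b' h ↦ (not_lt_zero h).elim⟩).antisymm le_self_nadd
  rwa [ih a' h]

@[simp]
theorem zero_nadd (a : Ordinal.{u}) : 0 ♯ a = a := by
  rw [nadd_comm, nadd_zero]

theorem nadd_succ (a b : Ordinal.{u}) : a ♯ succ b = succ (a ♯ b) := by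
  induction a using WellFoundedLT.induction with | _ a ih =>
  refine (nadd_le_iff.2 ⟨fun a' h ↦ ?_, fun b' h ↦ ?_⟩).antisymm
    (succ_le_of_lt (nadd_lt_nadd_left (lt_succ b) a))
  · rw [ih a' h, succ_lt_succ_iff]
    exact nadd_lt_nadd_right h b
  · exact lt_succ_iff.2 (nadd_le_nadd_left (lt_succ_iff.1 h) a)

theorem nadd_natCast (a : Ordinal.{u}) (n : ℕ) : a ♯ n = a + n := by
  induction n with
  | zero => simp
  | succ n ih =>
    rw [Nat.cast_succ, ← add_assoc, ← succ_eq_add_one, ← succ_eq_add_one, nadd_succ, ih]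

theorem isPrincipal_nadd_omega0 : IsPrincipal (· ♯ ·) ω := by
  intro a b ha hb
  obtain ⟨m, rfl⟩ := lt_omega0.1 ha
  obtain ⟨n, rfl⟩ := lt_omega0.1 hb
  dsimp only
  rw [nadd_natCast, ← Nat.cast_add]
  exact natCast_lt_omega0 _

theorem nadd_add_nadd_le (a b c d : Ordinal.{u}) : (a ♯ b) + (c ♯ d) ≤ (a + c) ♯ (b + d) := by
  induction c using WellFoundedLT.induction generalizing d with | _ c ihc =>
  induction d using WellFoundedLT.induction with | _ d ihd =>
  refine le_of_forall_lt fun x hx ↦ ?_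
  rcases lt_or_ge x (a ♯ b) with hx' | hx'
  · exact hx'.trans_le (nadd_le_nadd le_self_add le_self_add)
  obtain ⟨t, rfl⟩ := exists_add_of_le hx'
  rcases lt_nadd_iff.1 ((add_lt_add_iff_left _).1 hx) with ⟨c', hc', ht⟩ | ⟨d', hd', ht⟩
  · calc (a ♯ b) + t ≤ (a ♯ b) + (c' ♯ d) := by gcongr
      _ ≤ (a + c') ♯ (b + d) := ihc c' hc' d
      _ < (a + c) ♯ (b + d) := nadd_lt_nadd_right (by gcongr) _
  · calc (a ♯ b) + t ≤ (a ♯ b) + (c ♯ d') := by gcongr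
      _ ≤ (a + c) ♯ (b + d') := ihd d' hd'
      _ < (a + c) ♯ (b + d) := nadd_lt_nadd_left (by gcongr) _

theorem mul_nadd_le (p a b : Ordinal.{u}) : p * (a ♯ b) ≤ p * a ♯ p * b := by
  rcases eq_or_ne p 0 with rfl | hp0
  · simp
  induction a using WellFoundedLT.induction generalizing b with | _ a iha =>
  induction b using WellFoundedLT.induction with | _ b ihb =>
  refine le_of_forall_lt fun x hx ↦ (lt_mul_succ_div x hp0).trans_le ?_
  rcases lt_nadd_iff.1 ((lt_mul_iff_div_lt hp0).1 hx) with ⟨a', ha', hq⟩ | ⟨b', hb', hq⟩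
  · calc p * succ (x / p) ≤ p * (a' ♯ b) + (p ♯ 0) := by
          rw [nadd_zero, ← mul_succ]; gcongr
      _ ≤ (p * a' ♯ p * b) + (p ♯ 0) := by gcongr; exact iha a' ha' b
      _ ≤ (p * a' + p) ♯ (p * b + 0) := nadd_add_nadd_le _ _ _ _
      _ ≤ p * a ♯ p * b := by
          rw [add_zero, ← mul_succ]
          exact nadd_le_nadd_right (by gcongr; exact succ_le_of_lt ha') _
  · calc p * succ (x / p) ≤ p * (a ♯ b') + (0 ♯ p) := by
          rw [zero_nadd, ← mul_succ]; gcongr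
      _ ≤ (p * a ♯ p * b') + (0 ♯ p) := by gcongr; exact ihb b' hb'
      _ ≤ (p * a + 0) ♯ (p * b' + p) := nadd_add_nadd_le _ _ _ _
      _ ≤ p * a ♯ p * b := by
          rw [add_zero, ← mul_succ]
          exact nadd_le_nadd_left (by gcongr; exact succ_le_of_lt hb') _

noncomputable def naddBase (p a b : Ordinal.{u}) : Ordinal.{u} :=
  p * (a / p ♯ b / p) + (a % p ♯ b % p)

theorem naddBase_comm (p a b : Ordinal.{u}) : naddBase p a b = naddBase p b a := by
  rw [naddBase, naddBase, nadd_comm (a / p), nadd_comm (a % p)]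

theorem naddBase_le_nadd (p a b : Ordinal.{u}) : naddBase p a b ≤ a ♯ b :=
  calc naddBase p a b ≤ (p * (a / p) ♯ p * (b / p)) + (a % p ♯ b % p) := by
        rw [naddBase]; gcongr; exact mul_nadd_le _ _ _
    _ ≤ (p * (a / p) + a % p) ♯ (p * (b / p) + b % p) := nadd_add_nadd_le _ _ _ _
    _ = a ♯ b := by rw [div_add_mod, div_add_mod]

theorem div_le_self (a b : Ordinal.{u}) : a / b ≤ a := by
  rcases eq_or_ne b 0 with rfl | hb
  · simp
  · exact (le_mul_right _ (pos_iff_ne_zero.2 hb)).trans (mul_div_le a b)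

theorem CNF.snd_le {b : Ordinal.{u}} {y : Ordinal.{u} × Ordinal.{u}} : y ∈ CNF b o → y.2 ≤ o := by
  refine CNF.rec b (by simp) (fun o ho IH ↦ ?_) o
  rw [CNF.ne_zero ho]
  rintro (h | ⟨_, h⟩)
  · exact div_le_self o _
  · exact (IH h).trans (mod_le o _)

theorem mul_add_div_of_lt (hr : x < p) (c : Ordinal.{u}) : (p * c + x) / p = c := by
  rw [mul_add_div c (pos_of_gt hr).ne', div_eq_zero_of_lt hr, add_zero]

theorem mul_add_mod_of_lt (hr : x < p) (c : Ordinal.{u}) : (p * c + x) % p = x := by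
  rw [mul_add_mod_self, mod_eq_of_lt hr]

theorem mul_add_lt_mul_of_lt (hr : x < p) (hc : c < d) : p * c + x < p * d :=
  calc p * c + x < p * c + p := add_lt_add_right hr _
    _ = p * succ c := (mul_succ p c).symm
    _ ≤ p * d := mul_le_mul_right (succ_le_of_lt hc) p

namespace IsPrincipal

variable (hp : IsPrincipal (· ♯ ·) p)
include hp

theorem naddBase_strictMono_left (hp0 : p ≠ 0) (b : Ordinal.{u}) :
    StrictMono (naddBase p · b) := by
  intro a a' h
  dsimp only [naddBase]
  obtain hq | hq := (div_le_left h.le p).lt_or_eq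
  · exact (mul_add_lt_mul_of_lt (hp (mod_lt a hp0) (mod_lt b hp0))
      (nadd_lt_nadd_right hq _)).trans_le le_self_add
  · have hr : a % p < a' % p := by
      rwa [← div_add_mod a p, ← div_add_mod a' p, hq, add_lt_add_iff_left] at h
    rw [hq]
    exact add_lt_add_right (nadd_lt_nadd_right hr _) _

theorem nadd_eq_naddBase (a b : Ordinal.{u}) : a ♯ b = naddBase p a b := by
  rcases eq_or_ne p 0 with rfl | hp0
  · simp [naddBase]
  refine (nadd_le_of_strictMono (hp.naddBase_strictMono_left hp0) (fun a ↦ ?_) a b).antisymm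
    (naddBase_le_nadd p a b)
  exact fun x y h ↦ by simpa only [naddBase_comm p a] using hp.naddBase_strictMono_left hp0 a h

theorem mul_add_nadd_mul_add {r r' : Ordinal.{u}} (hr : r < p) (hr' : r' < p)
    (c c' : Ordinal.{u}) :
    (p * c + r) ♯ (p * c' + r') = p * (c ♯ c') + (r ♯ r') := by
  rw [hp.nadd_eq_naddBase, naddBase, mul_add_div_of_lt hr, mul_add_div_of_lt hr',
    mul_add_mod_of_lt hr, mul_add_mod_of_lt hr']

theorem mul {q : Ordinal.{u}} (hq : IsPrincipal (· ♯ ·) q) : IsPrincipal (· ♯ ·) (p * q) := by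
  intro a b ha hb
  rcases eq_or_ne p 0 with rfl | hp0
  · simp at ha
  dsimp only
  rw [hp.nadd_eq_naddBase, naddBase]
  exact mul_add_lt_mul_of_lt (hp (mod_lt a hp0) (mod_lt b hp0))
    (hq ((lt_mul_iff_div_lt hp0).1 ha) ((lt_mul_iff_div_lt hp0).1 hb))

end IsPrincipal

theorem isPrincipal_nadd_omega0_opow (ξ : Ordinal.{u}) : IsPrincipal (· ♯ ·) (ω ^ ξ) := by
  induction ξ using WellFoundedLT.induction with | _ ξ ih =>
  intro a b ha hb
  rcases eq_or_ne (a ⊔ b) 0 with h | h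
  · obtain ⟨rfl, rfl⟩ : a = 0 ∧ b = 0 := by simpa using h
    simpa using opow_pos ξ omega0_pos
  have hη : log ω (a ⊔ b) < ξ := (lt_opow_iff_log_lt one_lt_omega0 h).1 (max_lt ha hb)
  have hab : a ⊔ b < ω ^ log ω (a ⊔ b) * ω := by
    rw [← opow_succ]; exact lt_opow_succ_log_self one_lt_omega0 _
  refine ((ih _ hη).mul isPrincipal_nadd_omega0 (le_sup_left.trans_lt hab)
    (le_sup_right.trans_lt hab)).trans_le ?_
  rw [← opow_succ]
  exact opow_le_opow_right omega0_pos (succ_le_of_lt hη)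

theorem isPrincipal_nadd_of_isPrincipal_add (h : IsPrincipal (· + ·) o) :
    IsPrincipal (· ♯ ·) o := by
  obtain rfl | ⟨ξ, rfl⟩ := isPrincipal_add_iff_zero_or_omega0_opow.1 h
  · exact isPrincipal_zero
  · exact isPrincipal_nadd_omega0_opow ξ

end Ordinal

open Ordinal

theorem Omega1_eq_omega_one : Omega1 = ω₁ := by
  rw [Omega1, Cardinal.ord_aleph]

theorem one_lt_Omega1 : 1 < Omega1 := by
  rw [Omega1_eq_omega_one]
  exact one_lt_omega0.trans omega0_lt_omega_one

theorem isPrincipal_nadd_Omega1_opow (L : Ordinal) : IsPrincipal (· ♯ ·) (Omega1 ^ L) := by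
  rw [Omega1_eq_omega_one]
  exact isPrincipal_nadd_of_isPrincipal_add
    (isPrincipal_add_opow_of_isPrincipal_add (isPrincipal_add_omega 1) L)

theorem isPrincipal_nadd_Omega1 : IsPrincipal (· ♯ ·) Omega1 := by
  simpa using isPrincipal_nadd_Omega1_opow 1

theorem lt_Omega1_opow_self {α : Ordinal} (hα0 : α ≠ 0) (hα : α < epsOmega1) :
    α < Omega1 ^ α := by
  -- otherwise `α` would be a fixed point of `ξ ↦ ω ^ ξ` strictly between `Ω` and `ε_{Ω+1}`
  by_contra! h
  have hΩ : Omega1 ≤ α :=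
    calc Omega1 = Omega1 ^ (1 : Ordinal) := (opow_one _).symm
      _ ≤ Omega1 ^ α :=
        opow_le_opow_right (zero_lt_one.trans one_lt_Omega1) (one_le_iff_ne_zero.2 hα0)
      _ ≤ α := h
  have hΩα : Omega1 < α := by
    refine hΩ.lt_of_ne ?_
    rintro rfl
    simpa using (opow_lt_opow_iff_right one_lt_Omega1).2 one_lt_Omega1 |>.trans_le h
  have hfix : ω ^ α ≤ α :=
    (opow_le_opow_left α (Omega1_eq_omega_one ▸ omega0_lt_omega_one).le).trans h
  exact hα.not_ge (nfp_le_fp (isNormal_opow one_lt_omega0).strictMono.monotone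
    (add_one_le_of_lt hΩα) hfix)

theorem log_Omega1_lt_self {α : Ordinal} (hα0 : α ≠ 0) (hα : α < epsOmega1) :
    log Omega1 α < α :=
  (lt_opow_iff_log_lt one_lt_Omega1 hα0).1 (lt_Omega1_opow_self hα0 hα)

namespace KMem

variable {α γ L c r x : Ordinal}

theorem le (h : KMem γ α) : γ ≤ α := by
  induction h with
  | zero => exact le_rfl
  | coeff h => exact CNF.snd_le h
  | expo h _ ih => exact ih.trans ((CNF.fst_le_log h).trans (log_le_self _ _))

theorem zero_of_lt_epsOmega1 (hα : α < epsOmega1) : KMem 0 α := by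
  induction α using WellFoundedLT.induction with | _ α ih =>
  rcases eq_or_ne α 0 with rfl | hα0
  · exact .zero
  have hlog := log_Omega1_lt_self hα0 hα
  exact .expo (by rw [CNF.ne_zero hα0]; exact List.mem_cons_self) (ih _ hlog (hlog.trans hα))

theorem setOf_nonempty (α : Ordinal) : {γ | KMem γ α}.Nonempty := by
  rcases eq_or_ne α 0 with rfl | hα0
  · exact ⟨0, .zero⟩
  · exact ⟨_, .coeff (by rw [CNF.ne_zero hα0]; exact List.mem_cons_self)⟩

theorem setOf_bddAbove (α : Ordinal) : BddAbove {γ | KMem γ α} :=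
  ⟨α, fun _ ↦ le⟩

theorem setOf_eq_insert_union (hx : CNF Omega1 x = (L, c) :: CNF Omega1 r) (hL : KMem 0 L) :
    {γ | KMem γ x} = insert c ({γ | KMem γ L} ∪ {γ | KMem γ r}) := by
  ext γ
  simp only [Set.mem_ofPred_eq, Set.mem_insert_iff, Set.mem_union]
  constructor
  · rintro (_ | ⟨hm⟩ | ⟨hm, hK⟩)
    · simp at hx
    all_goals rw [hx] at hm; obtain hm | hm := List.mem_cons.1 hm
    · exact .inl (congrArg Prod.snd hm)
    · exact .inr (.inr (.coeff hm))
    · cases hm; exact .inr (.inl hK)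
    · exact .inr (.inr (.expo hm hK))
  · have head : (L, c) ∈ CNF Omega1 x := hx ▸ List.mem_cons_self
    have tail {e c'} (h : (e, c') ∈ CNF Omega1 r) : (e, c') ∈ CNF Omega1 x :=
      hx ▸ List.mem_cons_of_mem _ h
    rintro (rfl | hK | (_ | ⟨hm⟩ | ⟨hm, hK⟩))
    · exact .coeff head
    · exact .expo head hK
    · exact .expo head hL
    · exact .coeff (tail hm)
    · exact .expo (tail hm) hK

end KMem

section kMax

variable {α β L c c₁ c₂ r r₁ r₂ : Ordinal}

theorem kMax_opow_mul_add (hc0 : c ≠ 0) (hc : c < Omega1) (hr : r < Omega1 ^ L)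
    (hL : L < epsOmega1) : kMax (Omega1 ^ L * c + r) = c ⊔ (kMax L ⊔ kMax r) := by
  have hne := KMem.setOf_nonempty
  have hbdd := KMem.setOf_bddAbove
  rw [kMax, KMem.setOf_eq_insert_union (CNF.opow_mul_add one_lt_Omega1 hc0 hc hr)
      (KMem.zero_of_lt_epsOmega1 hL),
    csSup_insert ((hbdd L).union (hbdd r)) ((hne L).mono Set.subset_union_left),
    csSup_union (hbdd L) (hne L) (hbdd r) (hne r)]
  rfl

theorem kMax_opow_mul_add_le (hc : c < Omega1) (hr : r < Omega1 ^ L) (hL : L < epsOmega1) :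
    kMax (Omega1 ^ L * c + r) ≤ c ⊔ (kMax L ⊔ kMax r) := by
  rcases eq_or_ne c 0 with rfl | hc0
  · rw [mul_zero, zero_add]
    exact le_sup_right.trans le_sup_right
  · exact (kMax_opow_mul_add hc0 hc hr hL).le

theorem le_kMax_opow_mul_add (hc : c < Omega1) (hr : r < Omega1 ^ L) (hL : L < epsOmega1) :
    c ⊔ kMax r ≤ kMax (Omega1 ^ L * c + r) := by
  rcases eq_or_ne c 0 with rfl | hc0
  · simp
  · rw [kMax_opow_mul_add hc0 hc hr hL]
    exact sup_le_sup_left le_sup_right _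

def KMaxNaddBounds (α β : Ordinal) : Prop :=
  kMax (α ♯ β) ≤ kMax α ♯ kMax β ∧ kMax α ≤ kMax (α ♯ β) ∧ kMax β ≤ kMax (α ♯ β)

theorem KMaxNaddBounds.symm (h : KMaxNaddBounds α β) : KMaxNaddBounds β α := by
  obtain ⟨h₁, h₂, h₃⟩ := h
  rw [nadd_comm α β] at h₁ h₂ h₃
  exact ⟨nadd_comm (kMax α) _ ▸ h₁, h₃, h₂⟩

theorem KMaxNaddBounds.opow_mul_add (hL : L < epsOmega1) (hc₁0 : c₁ ≠ 0) (hc₁ : c₁ < Omega1)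
    (hc₂ : c₂ < Omega1) (hr₁ : r₁ < Omega1 ^ L) (hr₂ : r₂ < Omega1 ^ L)
    (ih : KMaxNaddBounds r₁ r₂) :
    KMaxNaddBounds (Omega1 ^ L * c₁ + r₁) (Omega1 ^ L * c₂ + r₂) := by
  obtain ⟨ih₁, ih₂, ih₃⟩ := ih
  have hc0 : c₁ ♯ c₂ ≠ 0 := (pos_iff_ne_zero.2 hc₁0 |>.trans_le le_self_nadd).ne'
  have hα := kMax_opow_mul_add hc₁0 hc₁ hr₁ hL
  have hβ := le_kMax_opow_mul_add hc₂ hr₂ hL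
  have hαβ : kMax ((Omega1 ^ L * c₁ + r₁) ♯ (Omega1 ^ L * c₂ + r₂)) =
      (c₁ ♯ c₂) ⊔ (kMax L ⊔ kMax (r₁ ♯ r₂)) := by
    rw [(isPrincipal_nadd_Omega1_opow L).mul_add_nadd_mul_add hr₁ hr₂]
    exact kMax_opow_mul_add hc0 (isPrincipal_nadd_Omega1 hc₁ hc₂)
      (isPrincipal_nadd_Omega1_opow L hr₁ hr₂) hL
  refine ⟨?_, ?_, ?_⟩
  · rw [hαβ, hα]
    refine sup_le (nadd_le_nadd le_sup_left (le_sup_left.trans hβ)) (sup_le ?_ ?_)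
    · exact (le_sup_left.trans le_sup_right).trans le_self_nadd
    · exact ih₁.trans (nadd_le_nadd (le_sup_right.trans le_sup_right) (le_sup_right.trans hβ))
  · rw [hαβ, hα]
    exact sup_le_sup le_self_nadd (sup_le_sup_left ih₂ _)
  · rw [hαβ]
    exact (kMax_opow_mul_add_le hc₂ hr₂ hL).trans (sup_le_sup le_nadd_self (sup_le_sup_left ih₃ _))

end kMax

open NaturalOps in
/-- coefficient bounds for natural sums:
`k(α ⊕ β) ≤ k(α) ⊕ k(β)`, and `k(α), k(β) ≤ k(α ⊕ β)`. -/
theorem stmt9 (α β : Ordinal.{0}) (hα : α < epsOmega1) (hβ : β < epsOmega1) :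
    kMax (α ♯ β) ≤ kMax α ♯ kMax β ∧
    kMax α ≤ kMax (α ♯ β) ∧ kMax β ≤ kMax (α ♯ β) := by
  change KMaxNaddBounds α β
  obtain ⟨o, ho⟩ : ∃ o, α ♯ β = o := ⟨_, rfl⟩
  induction o using WellFoundedLT.induction generalizing α β with | _ o ih =>
  wlog hβα : β ≤ α generalizing α β
  · exact (this β α hβ hα (nadd_comm β α ▸ ho) (le_of_not_ge hβα)).symm
  rcases eq_or_ne α 0 with rfl | hα0
  · obtain rfl : β = 0 := nonpos_iff_eq_zero.1 hβα
    simpa [KMaxNaddBounds] using le_self_nadd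
  set P := Omega1 ^ log Omega1 α
  have hP0 : P ≠ 0 := opow_ne_zero _ (zero_lt_one.trans one_lt_Omega1).ne'
  have hβP : β / P < Omega1 := (lt_mul_iff_div_lt hP0).1 <|
    hβα.trans_lt (opow_succ Omega1 _ ▸ lt_opow_succ_log_self one_lt_Omega1 α)
  have hlt : α % P ♯ β % P < o := ho ▸ (nadd_lt_nadd_right (mod_opow_log_lt_self _ hα0) _).trans_le
    (nadd_le_nadd_left (mod_le β _) α)
  rw [← div_add_mod α P, ← div_add_mod β P]
  exact .opow_mul_add ((log_le_self _ α).trans_lt hα) (div_opow_log_pos _ hα0).ne'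
    (div_opow_log_lt α one_lt_Omega1) hβP (mod_lt α hP0) (mod_lt β hP0)
    (ih _ hlt _ _ ((mod_le α _).trans_lt hα) ((mod_le β _).trans_lt hβ) rfl)
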